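/- Let ε ∈ [0,1], let x_t, y_t be the density-evolution sequences of a protograph, let d be the maximum degree of a check node with d ≥ 2, and let x̄_t = max_{e ∈ E} x_t(e). Suppose every variable node has degree at least 2 and every check node is adjacent to at most one variable node of degree 2. Then there exists a constant A > 0, depending only on ε, d and the maximum variable-node degree L (one may take A = (d − 1)^{L(L−1)}), such that x̄_{t+2} ≤ A · (x̄_t)² for every t ≥ 0. -/
import Mathlib


open Finset

lemma aux_one_sub_prod_le_sum {α : Type*} [DecidableEq α] (s : Finset α) (f : α → ℝ)
    (h0 : ∀ i ∈ s, 0 ≤ f i) (h1 : ∀ i ∈ s, f i ≤ 1) :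
    1 - ∏ i ∈ s, (1 - f i) ≤ ∑ i ∈ s, f i := by
  induction s using Finset.induction_on with
  | empty => simp
  | @insert a s hx ih =>
    rw [Finset.prod_insert hx, Finset.sum_insert hx]
    have h0' : ∀ i ∈ s, 0 ≤ f i := fun i hi => h0 i (Finset.mem_insert_of_mem hi)
    have h1' : ∀ i ∈ s, f i ≤ 1 := fun i hi => h1 i (Finset.mem_insert_of_mem hi)
    have ih' := ih h0' h1'
    have ha : 0 ≤ f a := h0 a (Finset.mem_insert_self a s)
    have ha1 : f a ≤ 1 := h1 a (Finset.mem_insert_self a s)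
    have hp0 : 0 ≤ ∏ i ∈ s, (1 - f i) :=
      Finset.prod_nonneg (fun i hi => by linarith [h1' i hi])
    have hp1 : ∏ i ∈ s, (1 - f i) ≤ 1 :=
      Finset.prod_le_one (fun i hi => by linarith [h1' i hi]) (fun i hi => by linarith [h0' i hi])
    nlinarith

lemma aux_prod_le_pow {α : Type*} (s : Finset α) (g : α → ℝ) (B : ℝ) (hB : 0 ≤ B)
    (h0 : ∀ i ∈ s, 0 ≤ g i) (h1 : ∀ i ∈ s, g i ≤ 1) (hg : ∀ i ∈ s, g i ≤ B)
    (n : ℕ) (hn : n ≤ s.card) :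
    ∏ i ∈ s, g i ≤ B ^ n := by
  have hm0 : (0:ℝ) ≤ min 1 B := le_min zero_le_one hB
  have h1' : ∏ i ∈ s, g i ≤ (min 1 B) ^ s.card := by
    calc ∏ i ∈ s, g i ≤ ∏ _i ∈ s, min 1 B :=
          Finset.prod_le_prod h0 (fun i hi => le_min (h1 i hi) (hg i hi))
      _ = (min 1 B) ^ s.card := by rw [Finset.prod_const]
  have h2' : (min 1 B) ^ s.card ≤ (min 1 B) ^ n :=
    pow_le_pow_of_le_one hm0 (min_le_left _ _) hn
  have h3' : (min 1 B) ^ n ≤ B ^ n := pow_le_pow_left₀ hm0 (min_le_right _ _) n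
  linarith


/-- Let `ε ∈ [0,1]`, let `x`, `y` be the density-evolution sequences of a
protograph, let `d ≥ 2` be the maximum check-node degree, and let `x̄ t = max_e x t e`.
Suppose every variable node has degree at least 2 and every check node is adjacent to at
most one degree-2 variable node.  Then there is a constant `A > 0`, depending only on
`ε`, `d` and the maximum variable-node degree `L` (one may take `A = (d-1)^(L*(L-1))`),
such that `x̄ (t+2) ≤ A * (x̄ t)^2` for every `t ≥ 0`. -/
theorem protograph_density_evolution_two_step_square
    {E V C : Type*} [Fintype E] [DecidableEq E] [Nonempty E]
    [Fintype V] [DecidableEq V] [Fintype C] [DecidableEq C]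
    (vmap : E → V) (cmap : E → C)
    (ε : ℝ) (hε : ε ∈ Set.Icc (0 : ℝ) 1)
    (x y : ℕ → E → ℝ)
    (hx0 : ∀ e : E, x 0 e = ε)
    (hy : ∀ (t : ℕ) (e : E), y (t + 1) e =
      1 - ∏ e' ∈ univ.filter (fun e' => e' ≠ e ∧ cmap e' = cmap e), (1 - x t e'))
    (hx : ∀ (t : ℕ) (e : E), x (t + 1) e =
      ε * ∏ e' ∈ univ.filter (fun e' => e' ≠ e ∧ vmap e' = vmap e), y (t + 1) e')
    (d : ℕ)
    (hd : d = univ.sup (fun c : C => (univ.filter (fun e : E => cmap e = c)).card))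
    (hd2 : 2 ≤ d)
    (L : ℕ)
    (hL : L = univ.sup (fun v : V => (univ.filter (fun e : E => vmap e = v)).card))
    (xbar : ℕ → ℝ)
    (hxbar : ∀ t : ℕ, xbar t = univ.sup' univ_nonempty (x t))
    (hvdeg : ∀ v : V, 2 ≤ (univ.filter (fun e : E => vmap e = v)).card)
    (hchk : ∀ c : C,
      (univ.filter (fun e : E => cmap e = c ∧
        (univ.filter (fun e' : E => vmap e' = vmap e)).card = 2)).card ≤ 1) :
    ∃ A : ℝ, 0 < A ∧ A = ((d : ℝ) - 1) ^ (L * (L - 1)) ∧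
      ∀ t : ℕ, xbar (t + 2) ≤ A * (xbar t) ^ 2 := by
  obtain ⟨hε0, hε1⟩ := hε
  have hd2' : (2:ℝ) ≤ (d:ℝ) := by exact_mod_cast hd2
  have hde : (1:ℝ) ≤ (d:ℝ) - 1 := by linarith
  -- local notation
  set deg : V → ℕ := fun v => (univ.filter (fun e : E => vmap e = v)).card with hdeg
  set sv : E → Finset E := fun e => univ.filter (fun e' => e' ≠ e ∧ vmap e' = vmap e) with hsvdef
  set sc : E → Finset E := fun e => univ.filter (fun e' => e' ≠ e ∧ cmap e' = cmap e) with hscdef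
  -- cardinalities
  have hsv : ∀ e : E, (sv e).card + 1 = deg (vmap e) := by
    intro e
    have he : sv e = (univ.filter (fun e' : E => vmap e' = vmap e)).erase e := by
      ext e'; simp [hsvdef, Finset.mem_erase, Finset.mem_filter]
    have hmem : e ∈ univ.filter (fun e' : E => vmap e' = vmap e) := by
      simp [Finset.mem_filter]
    have h2 : 2 ≤ deg (vmap e) := hvdeg (vmap e)
    rw [he, Finset.card_erase_of_mem hmem]
    simp only [hdeg] at h2 ⊢
    omega
  have hsc : ∀ e : E, (sc e).card + 1 ≤ d := by
    intro e
    have he : sc e = (univ.filter (fun e' : E => cmap e' = cmap e)).erase e := by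
      ext e'; simp [hscdef, Finset.mem_erase, Finset.mem_filter]
    have hmem : e ∈ univ.filter (fun e' : E => cmap e' = cmap e) := by
      simp [Finset.mem_filter]
    have hle : (univ.filter (fun e' : E => cmap e' = cmap e)).card ≤ d := by
      rw [hd]
      exact Finset.le_sup (f := fun c : C => (univ.filter (fun e : E => cmap e = c)).card)
        (Finset.mem_univ (cmap e))
    have hpos : 0 < (univ.filter (fun e' : E => cmap e' = cmap e)).card :=
      Finset.card_pos.mpr ⟨e, hmem⟩
    rw [he, Finset.card_erase_of_mem hmem]
    omega
  have hsvpos : ∀ e : E, 1 ≤ (sv e).card := by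
    intro e; have := hsv e; have := hvdeg (vmap e); simp only [hdeg] at *; omega
  -- bounds on x and y
  have hxb : ∀ t : ℕ, ∀ e : E, 0 ≤ x t e ∧ x t e ≤ 1 := by
    intro t
    induction t with
    | zero => intro e; rw [hx0]; exact ⟨hε0, hε1⟩
    | succ t ih =>
      have hyb : ∀ e : E, 0 ≤ y (t+1) e ∧ y (t+1) e ≤ 1 := by
        intro e
        rw [hy]
        have hp0 : 0 ≤ ∏ e' ∈ univ.filter (fun e' => e' ≠ e ∧ cmap e' = cmap e), (1 - x t e') :=
          Finset.prod_nonneg (fun e' _ => by linarith [(ih e').2])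
        have hp1 : ∏ e' ∈ univ.filter (fun e' => e' ≠ e ∧ cmap e' = cmap e), (1 - x t e') ≤ 1 :=
          Finset.prod_le_one (fun e' _ => by linarith [(ih e').2])
            (fun e' _ => by linarith [(ih e').1])
        constructor <;> linarith
      intro e
      rw [hx]
      have hp0 : 0 ≤ ∏ e' ∈ univ.filter (fun e' => e' ≠ e ∧ vmap e' = vmap e), y (t+1) e' :=
        Finset.prod_nonneg (fun e' _ => (hyb e').1)
      have hp1 : ∏ e' ∈ univ.filter (fun e' => e' ≠ e ∧ vmap e' = vmap e), y (t+1) e' ≤ 1 :=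
        Finset.prod_le_one (fun e' _ => (hyb e').1) (fun e' _ => (hyb e').2)
      constructor
      · exact mul_nonneg hε0 hp0
      · nlinarith
  have hyb : ∀ t : ℕ, ∀ e : E, 0 ≤ y (t+1) e ∧ y (t+1) e ≤ 1 := by
    intro t e
    rw [hy]
    have hp0 : 0 ≤ ∏ e' ∈ univ.filter (fun e' => e' ≠ e ∧ cmap e' = cmap e), (1 - x t e') :=
      Finset.prod_nonneg (fun e' _ => by linarith [(hxb t e').2])
    have hp1 : ∏ e' ∈ univ.filter (fun e' => e' ≠ e ∧ cmap e' = cmap e), (1 - x t e') ≤ 1 :=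
      Finset.prod_le_one (fun e' _ => by linarith [(hxb t e').2])
        (fun e' _ => by linarith [(hxb t e').1])
    constructor <;> linarith
  have hxle : ∀ t : ℕ, ∀ e : E, x t e ≤ xbar t := by
    intro t e; rw [hxbar]; exact Finset.le_sup' (x t) (Finset.mem_univ e)
  have hxbar0 : ∀ t : ℕ, 0 ≤ xbar t := by
    intro t
    obtain ⟨e⟩ := ‹Nonempty E›
    exact le_trans (hxb t e).1 (hxle t e)
  -- key bound on y
  have hkey : ∀ t : ℕ, ∀ e : E, y (t+1) e ≤ ((d:ℝ) - 1) * xbar t := by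
    intro t e
    rw [hy]
    have h1 := aux_one_sub_prod_le_sum
      (univ.filter (fun e' => e' ≠ e ∧ cmap e' = cmap e)) (x t)
      (fun e' _ => (hxb t e').1) (fun e' _ => (hxb t e').2)
    have h2 : ∑ e' ∈ univ.filter (fun e' => e' ≠ e ∧ cmap e' = cmap e), x t e'
        ≤ ((sc e).card : ℝ) * xbar t := by
      have := Finset.sum_le_card_nsmul
        (univ.filter (fun e' => e' ≠ e ∧ cmap e' = cmap e)) (x t) (xbar t)
        (fun e' _ => hxle t e')
      simpa [hscdef, nsmul_eq_mul] using this
    have h3 : ((sc e).card : ℝ) ≤ (d:ℝ) - 1 := by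
      have := hsc e
      have : ((sc e).card : ℝ) + 1 ≤ (d:ℝ) := by exact_mod_cast this
      linarith
    have h4 : ((sc e).card : ℝ) * xbar t ≤ ((d:ℝ) - 1) * xbar t :=
      mul_le_mul_of_nonneg_right h3 (hxbar0 t)
    linarith
  have hBnn : ∀ t : ℕ, 0 ≤ ((d:ℝ) - 1) * xbar t :=
    fun t => mul_nonneg (by linarith) (hxbar0 t)
  -- x(t+1) bounded by powers
  have hxpow : ∀ t : ℕ, ∀ e : E, ∀ n : ℕ, n ≤ (sv e).card →
      x (t+1) e ≤ (((d:ℝ) - 1) * xbar t) ^ n := by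
    intro t e n hn
    rw [hx]
    have hprod : ∏ e' ∈ univ.filter (fun e' => e' ≠ e ∧ vmap e' = vmap e), y (t+1) e'
        ≤ (((d:ℝ) - 1) * xbar t) ^ n :=
      aux_prod_le_pow _ _ _ (hBnn t) (fun e' _ => (hyb t e').1) (fun e' _ => (hyb t e').2)
        (fun e' _ => hkey t e') n hn
    have hp0 : 0 ≤ ∏ e' ∈ univ.filter (fun e' => e' ≠ e ∧ vmap e' = vmap e), y (t+1) e' :=
      Finset.prod_nonneg (fun e' _ => (hyb t e').1)
    nlinarith
  have hx1bar : ∀ t : ℕ, xbar (t+1) ≤ ((d:ℝ) - 1) * xbar t := by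
    intro t
    rw [hxbar]
    apply Finset.sup'_le
    intro e _
    have := hxpow t e 1 (hsvpos e)
    simpa using this
  -- L ≥ 3
  have hdegle : ∀ v : V, deg v ≤ L := by
    intro v
    rw [hL]
    exact Finset.le_sup (f := fun v : V => (univ.filter (fun e : E => vmap e = v)).card)
      (Finset.mem_univ v)
  have hL3 : 3 ≤ L := by
    by_contra hlt
    push_neg at hlt
    obtain ⟨e₀⟩ := ‹Nonempty E›
    have hL2 : L = 2 := by
      have h1 := hvdeg (vmap e₀)
      have h2 := hdegle (vmap e₀)
      simp only [hdeg] at h1 h2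
      omega
    have hCne : (univ : Finset C).Nonempty := ⟨cmap e₀, Finset.mem_univ _⟩
    obtain ⟨c, _, hc⟩ := Finset.exists_mem_eq_sup (univ : Finset C) hCne
      (fun c : C => (univ.filter (fun e : E => cmap e = c)).card)
    have hcard : 1 < (univ.filter (fun e : E => cmap e = c)).card := by
      rw [← hc, ← hd]; omega
    obtain ⟨e₁, he₁, e₂, he₂, hne⟩ := Finset.one_lt_card.mp hcard
    have hdeg2 : ∀ e : E, e ∈ univ.filter (fun e : E => cmap e = c) →
        e ∈ univ.filter (fun e : E => cmap e = c ∧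
          (univ.filter (fun e' : E => vmap e' = vmap e)).card = 2) := by
      intro e he
      rw [Finset.mem_filter] at he ⊢
      refine ⟨he.1, he.2, ?_⟩
      have h1 := hvdeg (vmap e)
      have h2 := hdegle (vmap e)
      simp only [hdeg] at h1 h2
      omega
    have hsub : ({e₁, e₂} : Finset E) ⊆ univ.filter (fun e : E => cmap e = c ∧
        (univ.filter (fun e' : E => vmap e' = vmap e)).card = 2) := by
      intro e he
      rcases Finset.mem_insert.mp he with h | h
      · exact h ▸ hdeg2 e₁ he₁
      · exact (Finset.mem_singleton.mp h) ▸ hdeg2 e₂ he₂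
    have h2le := Finset.card_le_card hsub
    rw [Finset.card_pair hne] at h2le
    have := hchk c
    omega
  refine ⟨((d:ℝ) - 1) ^ (L * (L - 1)), pow_pos (by linarith) _, rfl, ?_⟩
  intro t
  -- pointwise bound at time t+2
  have hpt : ∀ e : E, x (t+2) e ≤ ((d:ℝ) - 1) ^ 4 * (xbar t) ^ 2 := by
    intro e
    rcases eq_or_lt_of_le (hsvpos e) with h1 | h2
    · -- degree 2 case
      obtain ⟨e', hse'⟩ := Finset.card_eq_one.mp h1.symm
      have he'mem : e' ∈ sv e := by rw [hse']; exact Finset.mem_singleton_self e'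
      have he'v : vmap e' = vmap e := by
        simp only [hsvdef, Finset.mem_filter] at he'mem
        exact he'mem.2.2
      have hdege : deg (vmap e) = 2 := by
        have := hsv e; rw [← h1] at this; omega
      -- x (t+2) e ≤ y (t+2) e'
      have hstep1 : x (t+2) e ≤ y (t+2) e' := by
        have hxe : x (t+2) e = ε * y (t+2) e' := by
          rw [hx]
          have : (univ.filter (fun e'' => e'' ≠ e ∧ vmap e'' = vmap e)) = {e'} := hse'
          rw [this, Finset.prod_singleton]
        rw [hxe]
        have := (hyb (t+1) e').1
        nlinarith
      -- every edge at cmap e' other than e' has variable degree ≥ 3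
      have hdeg3 : ∀ e'' ∈ sc e', 3 ≤ deg (vmap e'') := by
        intro e'' he''
        simp only [hscdef, Finset.mem_filter] at he''
        by_contra hlt
        push_neg at hlt
        have hd2'' : deg (vmap e'') = 2 := by
          have := hvdeg (vmap e''); simp only [hdeg] at this hlt ⊢; omega
        have hmem1 : e' ∈ univ.filter (fun e : E => cmap e = cmap e' ∧
            (univ.filter (fun ea : E => vmap ea = vmap e)).card = 2) := by
          rw [Finset.mem_filter]
          refine ⟨Finset.mem_univ _, rfl, ?_⟩
          rw [he'v]
          exact hdege
        have hmem2 : e'' ∈ univ.filter (fun e : E => cmap e = cmap e' ∧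
            (univ.filter (fun ea : E => vmap ea = vmap e)).card = 2) := by
          rw [Finset.mem_filter]
          exact ⟨Finset.mem_univ _, he''.2.2, hd2''⟩
        have hsub : ({e', e''} : Finset E) ⊆ univ.filter (fun e : E => cmap e = cmap e' ∧
            (univ.filter (fun ea : E => vmap ea = vmap e)).card = 2) := by
          intro a ha
          rcases Finset.mem_insert.mp ha with h | h
          · exact h ▸ hmem1
          · exact (Finset.mem_singleton.mp h) ▸ hmem2
        have h2le := Finset.card_le_card hsub
        rw [Finset.card_pair (Ne.symm he''.2.1)] at h2le
        have := hchk (cmap e')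
        omega
      -- bound y (t+2) e'
      have hstep2 : y (t+2) e' ≤ ((d:ℝ) - 1) * ((((d:ℝ) - 1) * xbar t) ^ 2) := by
        rw [hy]
        have h1' := aux_one_sub_prod_le_sum
          (univ.filter (fun e'' => e'' ≠ e' ∧ cmap e'' = cmap e')) (x (t+1))
          (fun e'' _ => (hxb (t+1) e'').1) (fun e'' _ => (hxb (t+1) e'').2)
        have hterm : ∀ e'' ∈ univ.filter (fun e'' => e'' ≠ e' ∧ cmap e'' = cmap e'),
            x (t+1) e'' ≤ (((d:ℝ) - 1) * xbar t) ^ 2 := by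
          intro e'' he''
          apply hxpow t e'' 2
          have h3 := hdeg3 e'' (by simpa [hscdef] using he'')
          have h4 := hsv e''
          simp only [hdeg] at h3 h4
          omega
        have h2' : ∑ e'' ∈ univ.filter (fun e'' => e'' ≠ e' ∧ cmap e'' = cmap e'), x (t+1) e''
            ≤ ((sc e').card : ℝ) * ((((d:ℝ) - 1) * xbar t) ^ 2) := by
          have := Finset.sum_le_card_nsmul
            (univ.filter (fun e'' => e'' ≠ e' ∧ cmap e'' = cmap e')) (x (t+1))
            ((((d:ℝ) - 1) * xbar t) ^ 2) hterm
          simpa [hscdef, nsmul_eq_mul] using this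
        have h3' : ((sc e').card : ℝ) ≤ (d:ℝ) - 1 := by
          have := hsc e'
          have : ((sc e').card : ℝ) + 1 ≤ (d:ℝ) := by exact_mod_cast this
          linarith
        have h4' : ((sc e').card : ℝ) * ((((d:ℝ) - 1) * xbar t) ^ 2)
            ≤ ((d:ℝ) - 1) * ((((d:ℝ) - 1) * xbar t) ^ 2) :=
          mul_le_mul_of_nonneg_right h3' (by positivity)
        linarith
      have h5 : ((d:ℝ)-1) * (((d:ℝ)-1) * xbar t) ^ 2 = ((d:ℝ)-1) ^ 3 * xbar t ^ 2 := by ring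
      have h6 : ((d:ℝ)-1) ^ 3 ≤ ((d:ℝ)-1) ^ 4 := pow_le_pow_right₀ hde (by norm_num)
      have h7 := mul_le_mul_of_nonneg_right h6 (sq_nonneg (xbar t))
      linarith
    · -- degree ≥ 3 case
      have hle2 : 2 ≤ (sv e).card := h2
      have := hxpow (t+1) e 2 hle2
      have hb := hx1bar t
      have hA : ((d:ℝ)-1) * xbar (t+1) ≤ ((d:ℝ)-1) * (((d:ℝ)-1) * xbar t) :=
        mul_le_mul_of_nonneg_left hb (by linarith)
      have hB' : (((d:ℝ)-1) * xbar (t+1)) ^ 2 ≤ (((d:ℝ)-1) * (((d:ℝ)-1) * xbar t)) ^ 2 :=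
        pow_le_pow_left₀ (hBnn (t+1)) hA 2
      have heq : (((d:ℝ)-1) * (((d:ℝ)-1) * xbar t)) ^ 2 = ((d:ℝ)-1) ^ 4 * xbar t ^ 2 := by ring
      linarith
  have hsup : xbar (t+2) ≤ ((d:ℝ) - 1) ^ 4 * (xbar t) ^ 2 := by
    rw [hxbar]
    exact Finset.sup'_le _ _ (fun e _ => hpt e)
  have hpowle : ((d:ℝ) - 1) ^ 4 ≤ ((d:ℝ) - 1) ^ (L * (L - 1)) := by
    apply pow_le_pow_right₀ hde
    calc 4 ≤ 3 * 2 := by norm_num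
      _ ≤ L * (L - 1) := Nat.mul_le_mul hL3 (by omega)
  have := mul_le_mul_of_nonneg_right hpowle (sq_nonneg (xbar t))
  linarith
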